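/- arXiv:1201.0458 — 2 statements merged into one kernel-verified Lean document; each statement's English description precedes it below -/
import Mathlib

section
/- If all side lengths a_1, …, a_n of a board are odd, then the board has one more cell of one color than the other, and consequently no closed knight's tour exists on it. -/
/-- Two cells of the grid `∏ i, Fin (a i)` are related by a knight move iff they agree in
all but two coordinates, and in those two coordinates differ by 1 and by 2 in some order. -/
def knightAdj {n : ℕ} {a : Fin n → ℕ} (x y : ∀ i, Fin (a i)) : Prop :=
  ∃ i j : Fin n, i ≠ j ∧
    ((|(x i : ℤ) - (y i : ℤ)| = 1 ∧ |(x j : ℤ) - (y j : ℤ)| = 2) ∨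
     (|(x i : ℤ) - (y i : ℤ)| = 2 ∧ |(x j : ℤ) - (y j : ℤ)| = 1)) ∧
    ∀ k, k ≠ i → k ≠ j → x k = y k

/-- The knight-move graph on the grid `∏ i, Fin (a i)`. -/
def knightGraph {n : ℕ} (a : Fin n → ℕ) : SimpleGraph (∀ i, Fin (a i)) where
  Adj := knightAdj
  symm := by
    constructor
    rintro x y ⟨i, j, hij, h, hk⟩
    refine ⟨i, j, hij, ?_, fun k h1 h2 => (hk k h1 h2).symm⟩
    rw [abs_sub_comm ((y i : ℤ)) ((x i : ℤ)), abs_sub_comm ((y j : ℤ)) ((x j : ℤ))]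
    exact h
  loopless := by
    constructor
    rintro x ⟨i, j, hij, h, hk⟩
    simp [sub_self] at h

private lemma sum_neg_one_pow_odd : ∀ k : ℕ, ∑ i ∈ Finset.range (2 * k + 1), (-1 : ℤ) ^ i = 1
  | 0 => by simp
  | k + 1 => by
    have h := sum_neg_one_pow_odd k
    have : 2 * (k + 1) + 1 = (2 * k + 1) + 1 + 1 := by ring
    rw [this, Finset.sum_range_succ, Finset.sum_range_succ, h]
    have h1 : Odd (2 * k + 1) := ⟨k, by ring⟩
    have h2 : Even (2 * k + 1 + 1) := by simpa using h1.add_one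
    rw [h1.neg_one_pow, h2.neg_one_pow]
    ring

private def col {n : ℕ} {a : Fin n → ℕ} (x : ∀ i, Fin (a i)) : ZMod 2 :=
  ∑ i, ((x i : ℤ) : ZMod 2)

private lemma col_adj {n : ℕ} {a : Fin n → ℕ} {x y : ∀ i, Fin (a i)}
    (h : knightAdj x y) : col x = col y + 1 := by
  obtain ⟨i, j, hij, hd, hk⟩ := h
  have key : col x - col y = 1 := by
    have : col x - col y = ∑ k, (((x k : ℤ) - (y k : ℤ) : ℤ) : ZMod 2) := by
      simp [col, ← Finset.sum_sub_distrib]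
    rw [this]
    have hrest : ∀ k ∈ (Finset.univ.erase i).erase j, (((x k : ℤ) - (y k : ℤ) : ℤ) : ZMod 2) = 0 := by
      intro k hk'
      have h1 := Finset.ne_of_mem_erase hk'
      have h2 := Finset.ne_of_mem_erase (Finset.mem_of_mem_erase hk')
      rw [hk k h2 h1]
      simp
    have hji : j ∈ Finset.univ.erase i := Finset.mem_erase.2 ⟨hij.symm, Finset.mem_univ j⟩
    rw [← Finset.add_sum_erase _ _ (Finset.mem_univ i), ← Finset.add_sum_erase _ _ hji,
      Finset.sum_eq_zero hrest, add_zero]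
    have one_or : ∀ d : ℤ, |d| = 1 → ((d : ZMod 2) = 1) := by
      intro d hd1
      rcases abs_eq (by norm_num : (0:ℤ) ≤ 1) |>.1 hd1 with h | h <;> subst h <;> decide
    have two_or : ∀ d : ℤ, |d| = 2 → ((d : ZMod 2) = 0) := by
      intro d hd2
      rcases abs_eq (by norm_num : (0:ℤ) ≤ 2) |>.1 hd2 with h | h <;> subst h <;> decide
    rcases hd with ⟨h1, h2⟩ | ⟨h1, h2⟩
    · rw [one_or _ h1, two_or _ h2]; ring
    · rw [two_or _ h1, one_or _ h2]; ring
  linear_combination key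

private lemma col_walk {n : ℕ} {a : Fin n → ℕ} {u v : ∀ i, Fin (a i)}
    (p : (knightGraph a).Walk u v) : col v = col u + (p.length : ZMod 2) := by
  induction p with
  | nil => simp
  | cons h p ih =>
    rw [ih, col_adj h, SimpleGraph.Walk.length_cons]
    push_cast
    have h2 : (2 : ZMod 2) = 0 := rfl
    linear_combination -h2

/-- If all side lengths of the board are odd, then the board has one more cell of one
colour (parity of coordinate sum) than the other, and consequently there is no closed
knight's tour on it. -/
theorem no_closed_tour_all_odd {n : ℕ} (a : Fin n → ℕ) (ha : ∀ i, Odd (a i)) :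
    (Finset.univ.filter fun x : ∀ i, Fin (a i) => (∑ i, (x i : ℕ)) % 2 = 0).card =
      (Finset.univ.filter fun x : ∀ i, Fin (a i) => (∑ i, (x i : ℕ)) % 2 = 1).card + 1 ∧
    ¬ ∃ (v : ∀ i, Fin (a i)) (p : (knightGraph a).Walk v v), p.IsHamiltonianCycle := by
  classical
  have key : ∑ x : ∀ i, Fin (a i), (-1 : ℤ) ^ (∑ i, (x i : ℕ)) = 1 := by
    have hpow : ∀ x : ∀ i, Fin (a i), (-1 : ℤ) ^ (∑ i, (x i : ℕ)) = ∏ i, (-1 : ℤ) ^ (x i : ℕ) := by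
      intro x
      rw [Finset.prod_pow_eq_pow_sum]
    simp_rw [hpow]
    have hps := Finset.prod_univ_sum (κ := fun i : Fin n => Fin (a i))
      (fun _ => Finset.univ) (fun i k => (-1 : ℤ) ^ (k : ℕ))
    rw [Fintype.piFinset_univ] at hps
    rw [← hps]
    rw [Finset.prod_eq_one]
    intro i _
    obtain ⟨k, hk⟩ := ha i
    rw [Fin.sum_univ_eq_sum_range (fun m => (-1 : ℤ) ^ m), hk]
    exact sum_neg_one_pow_odd k
  set P := fun x : ∀ i, Fin (a i) => (∑ i, (x i : ℕ)) % 2 = 0 with hP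
  have h1 : ∑ x ∈ Finset.univ.filter P, (-1 : ℤ) ^ (∑ i, (x i : ℕ)) =
      ((Finset.univ.filter P).card : ℤ) := by
    rw [Finset.sum_congr rfl (g := fun _ => (1 : ℤ))
      (fun x hx => (Nat.even_iff.2 (Finset.mem_filter.1 hx).2).neg_one_pow)]
    simp
    rfl
  have h2 : ∑ x ∈ Finset.univ.filter (fun x => ¬ P x), (-1 : ℤ) ^ (∑ i, (x i : ℕ)) =
      -((Finset.univ.filter fun x => ¬ P x).card : ℤ) := by
    rw [Finset.sum_congr rfl (g := fun _ => (-1 : ℤ)) (fun x hx => ?_)]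
    · simp
    · have hx' : ¬ P x := (Finset.mem_filter.1 hx).2
      simp only [hP, Nat.mod_two_ne_zero] at hx'
      exact (Nat.odd_iff.2 hx').neg_one_pow
  have hsplit := Finset.sum_filter_add_sum_filter_not Finset.univ P
    (fun x : ∀ i, Fin (a i) => (-1 : ℤ) ^ (∑ i, (x i : ℕ)))
  rw [key, h1, h2] at hsplit
  have hnot : (Finset.univ.filter fun x : ∀ i, Fin (a i) => ¬ P x) =
      Finset.univ.filter fun x => (∑ i, (x i : ℕ)) % 2 = 1 := by
    apply Finset.filter_congr
    intro x _
    simp only [hP]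
    exact Nat.mod_two_ne_zero
  rw [hnot] at hsplit
  have hcard : (Finset.univ.filter P).card =
      (Finset.univ.filter fun x : ∀ i, Fin (a i) => (∑ i, (x i : ℕ)) % 2 = 1).card + 1 := by
    have : ((Finset.univ.filter P).card : ℤ) =
        ((Finset.univ.filter fun x : ∀ i, Fin (a i) => (∑ i, (x i : ℕ)) % 2 = 1).card : ℤ) + 1 := by
      linarith
    exact_mod_cast this
  refine ⟨hcard, ?_⟩
  rintro ⟨v, p, hp⟩
  have hlen : p.length = Fintype.card (∀ i, Fin (a i)) := hp.length_eq
  have htot := Finset.card_filter_add_card_filter_not (s := Finset.univ) (p := P)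
  rw [hnot, Finset.card_univ, hcard] at htot
  have hw := col_walk p
  have h0 : ((p.length : ℕ) : ZMod 2) = 0 := (left_eq_add).1 hw
  have hdvd : 2 ∣ p.length := (ZMod.natCast_eq_zero_iff _ _).1 h0
  rw [hlen] at hdvd
  revert htot hdvd
  generalize (Finset.univ.filter fun x : ∀ i, Fin (a i) => (∑ i, (x i : ℕ)) % 2 = 1).card = O
  generalize Fintype.card (∀ i, Fin (a i)) = C
  clear key h1 h2 hsplit hnot hcard hlen hw h0 hp
  omega
end

section
/- There exists a closed knight's tour on the 3×4×2×2 board (48 cells). -/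
instance {n : ℕ} {a : Fin n → ℕ} (x y : ∀ i, Fin (a i)) : Decidable (knightAdj x y) := by
  unfold knightAdj; infer_instance

instance {n : ℕ} {a : Fin n → ℕ} (x y : ∀ i, Fin (a i)) :
    Decidable ((knightGraph a).Adj x y) :=
  inferInstanceAs (Decidable (knightAdj x y))

/-- Helper to build a cell of the 3×4×2×2 board. -/
def c (a : Fin 3) (b : Fin 4) (cc d : Fin 2) : ∀ i : Fin 4, Fin (![3, 4, 2, 2] i) :=
  Fin.cons a (Fin.cons b (Fin.cons cc (Fin.cons d finZeroElim)))

/-- The explicit closed tour. -/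
def tourWalk : (knightGraph ![3, 4, 2, 2]).Walk (c 0 0 0 0) (c 0 0 0 0) :=
  SimpleGraph.Walk.cons (u := c 0 0 0 0) (by decide) (SimpleGraph.Walk.cons (u := c 1 2 0 0) (by decide) (SimpleGraph.Walk.cons (u := c 1 0 1 0) (by decide) (SimpleGraph.Walk.cons (u := c 1 2 1 1) (by decide) (SimpleGraph.Walk.cons (u := c 1 0 0 1) (by decide) (SimpleGraph.Walk.cons (u := c 0 2 0 1) (by decide) (SimpleGraph.Walk.cons (u := c 0 0 1 1) (by decide) (SimpleGraph.Walk.cons (u := c 0 2 1 0) (by decide) (SimpleGraph.Walk.cons (u := c 2 2 1 1) (by decide) (SimpleGraph.Walk.cons (u := c 2 0 0 1) (by decide) (SimpleGraph.Walk.cons (u := c 1 2 0 1) (by decide) (SimpleGraph.Walk.cons (u := c 1 0 1 1) (by decide) (SimpleGraph.Walk.cons (u := c 1 2 1 0) (by decide) (SimpleGraph.Walk.cons (u := c 2 0 1 0) (by decide) (SimpleGraph.Walk.cons (u := c 2 2 0 0) (by decide) (SimpleGraph.Walk.cons (u := c 1 0 0 0) (by decide) (SimpleGraph.Walk.cons (u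 := c 0 2 0 0) (by decide) (SimpleGraph.Walk.cons (u := c 0 0 0 1) (by decide) (SimpleGraph.Walk.cons (u := c 2 0 0 0) (by decide) (SimpleGraph.Walk.cons (u := c 0 0 1 0) (by decide) (SimpleGraph.Walk.cons (u := c 2 0 1 1) (by decide) (SimpleGraph.Walk.cons (u := c 2 2 1 0) (by decide) (SimpleGraph.Walk.cons (u := c 0 2 1 1) (by decide) (SimpleGraph.Walk.cons (u := c 2 2 0 1) (by decide) (SimpleGraph.Walk.cons (u := c 0 3 0 1) (by decide) (SimpleGraph.Walk.cons (u := c 1 1 0 1) (by decide) (SimpleGraph.Walk.cons (u := c 1 3 1 1) (by decide) (SimpleGraph.Walk.cons (u := c 1 1 1 0) (by decide) (SimpleGraph.Walk.cons (u := c 1 3 0 0) (by decide) (SimpleGraph.Walk.cons (u := c 0 1 0 0) (by decide) (SimpleGraph.Walk.cons (u := c 0 3 1 0) (by decide) (SimpleGraph.Walk.cons (u := c 0 1 1 1) (by decide) (SimpleGraph.Walk.cons (u := c 2 1 1 0) (by decide) (SimpleGraph.Walk.cons (u := c 2 3 0 0) (by decide) (SimpleGraph.Walk.cons (u := c 2 1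 0 1) (by decide) (SimpleGraph.Walk.cons (u := c 2 3 1 1) (by decide) (SimpleGraph.Walk.cons (u := c 1 1 1 1) (by decide) (SimpleGraph.Walk.cons (u := c 1 3 1 0) (by decide) (SimpleGraph.Walk.cons (u := c 1 1 0 0) (by decide) (SimpleGraph.Walk.cons (u := c 1 3 0 1) (by decide) (SimpleGraph.Walk.cons (u := c 0 1 0 1) (by decide) (SimpleGraph.Walk.cons (u := c 2 1 1 1) (by decide) (SimpleGraph.Walk.cons (u := c 2 3 1 0) (by decide) (SimpleGraph.Walk.cons (u := c 0 3 1 1) (by decide) (SimpleGraph.Walk.cons (u := c 0 1 1 0) (by decide) (SimpleGraph.Walk.cons (u := c 0 3 0 0) (by decide) (SimpleGraph.Walk.cons (u := c 2 3 0 1) (by decide) (SimpleGraph.Walk.cons (u := c 2 1 0 0) (by decide) (SimpleGraph.Walk.nil))))))))))))))))))))))))))))))))))))))))))))))))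

/-- There exists a closed knight's tour (Hamiltonian cycle in the knight-move graph) on
the 3×4×2×2 board. -/
theorem exists_closed_tour_3x4x2x2 :
    ∃ (v : ∀ i : Fin 4, Fin (![3, 4, 2, 2] i))
      (p : (knightGraph ![3, 4, 2, 2]).Walk v v), p.IsHamiltonianCycle := by
  refine ⟨c 0 0 0 0, tourWalk, ?_⟩
  rw [SimpleGraph.Walk.isHamiltonianCycle_iff_isCycle_and_support_count_tail_eq_one]
  refine ⟨?_, ?_⟩
  · rw [SimpleGraph.Walk.isCycle_def]
    refine ⟨?_, ?_, ?_⟩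
    · rw [SimpleGraph.Walk.isTrail_def]; decide
    · simp [tourWalk]
    · decide
  · decide
end
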